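/- arXiv:1506.02952 — 2 statements merged into one kernel-verified Lean document; each statement's English description precedes it below -/
import Mathlib

section
/- The set of trinions fixed by conjugation, {v : v* = v} = {a + i b - j b : a, b ∈ ℝ}, is a 2-dimensional subalgebra of the trinion ring, and it is isomorphic as an ℝ-algebra to ℝ × ℝ. -/
@[ext]
structure Trinion where
  a : ℝ
  b : ℝ
  c : ℝ

namespace Trinion

instance : Zero Trinion := ⟨⟨0, 0, 0⟩⟩
instance : One Trinion := ⟨⟨1, 0, 0⟩⟩
instance : Add Trinion := ⟨fun v w => ⟨v.a + w.a, v.b + w.b, v.c + w.c⟩⟩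
instance : Neg Trinion := ⟨fun v => ⟨-v.a, -v.b, -v.c⟩⟩
instance : Mul Trinion := ⟨fun v w =>
  ⟨v.a * w.a - v.b * w.c - v.c * w.b,
   v.a * w.b + v.b * w.a - v.c * w.c,
   v.a * w.c + v.c * w.a + v.b * w.b⟩⟩

@[simp] lemma zero_a : (0 : Trinion).a = 0 := rfl
@[simp] lemma zero_b : (0 : Trinion).b = 0 := rfl
@[simp] lemma zero_c : (0 : Trinion).c = 0 := rfl
@[simp] lemma one_a : (1 : Trinion).a = 1 := rfl
@[simp] lemma one_b : (1 : Trinion).b = 0 := rfl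
@[simp] lemma one_c : (1 : Trinion).c = 0 := rfl
@[simp] lemma add_a (v w : Trinion) : (v + w).a = v.a + w.a := rfl
@[simp] lemma add_b (v w : Trinion) : (v + w).b = v.b + w.b := rfl
@[simp] lemma add_c (v w : Trinion) : (v + w).c = v.c + w.c := rfl
@[simp] lemma neg_a (v : Trinion) : (-v).a = -v.a := rfl
@[simp] lemma neg_b (v : Trinion) : (-v).b = -v.b := rfl
@[simp] lemma neg_c (v : Trinion) : (-v).c = -v.c := rfl
@[simp] lemma mul_a (v w : Trinion) :
    (v * w).a = v.a * w.a - v.b * w.c - v.c * w.b := rfl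
@[simp] lemma mul_b (v w : Trinion) :
    (v * w).b = v.a * w.b + v.b * w.a - v.c * w.c := rfl
@[simp] lemma mul_c (v w : Trinion) :
    (v * w).c = v.a * w.c + v.c * w.a + v.b * w.b := rfl

instance : CommRing Trinion where
  add_assoc u v w := by ext <;> simp <;> ring
  zero_add v := by ext <;> simp
  add_zero v := by ext <;> simp
  add_comm u v := by ext <;> simp <;> ring
  neg_add_cancel v := by ext <;> simp
  left_distrib u v w := by ext <;> simp <;> ring
  right_distrib u v w := by ext <;> simp <;> ring
  zero_mul v := by ext <;> simp
  mul_zero v := by ext <;> simp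
  mul_assoc u v w := by ext <;> simp <;> ring
  one_mul v := by ext <;> simp
  mul_one v := by ext <;> simp
  mul_comm u v := by ext <;> simp <;> ring
  nsmul := nsmulRec
  zsmul := zsmulRec

def algMap : ℝ →+* Trinion where
  toFun r := ⟨r, 0, 0⟩
  map_one' := rfl
  map_mul' r s := by ext <;> simp
  map_zero' := rfl
  map_add' r s := by ext <;> simp

instance : Algebra ℝ Trinion := algMap.toAlgebra

/-- The imaginary unit `i`. -/
def I : Trinion := ⟨0, 1, 0⟩

/-- The imaginary unit `j`. -/
def J : Trinion := ⟨0, 0, 1⟩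

/-- Trinion conjugation: `(a + i b + j c)* = a - j b - i c`. -/
def conj (v : Trinion) : Trinion := ⟨v.a, -v.c, -v.b⟩

/-- The real part. -/
def re (v : Trinion) : ℝ := v.a

/-- The modulus. -/
noncomputable def tmod (v : Trinion) : ℝ := Real.sqrt (v.a ^ 2 + v.b ^ 2 + v.c ^ 2)

end Trinion
namespace Trinion

@[simp] lemma smul_a (r : ℝ) (v : Trinion) : (r • v).a = r * v.a := by
  show (algMap r * v).a = _; simp [algMap]
@[simp] lemma smul_b (r : ℝ) (v : Trinion) : (r • v).b = r * v.b := by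
  show (algMap r * v).b = _; simp [algMap]
@[simp] lemma smul_c (r : ℝ) (v : Trinion) : (r • v).c = r * v.c := by
  show (algMap r * v).c = _; simp [algMap]

@[simp] lemma algebraMap_def (r : ℝ) : (algebraMap ℝ Trinion r) = ⟨r, 0, 0⟩ := rfl

def fixedSub : Subalgebra ℝ Trinion where
  carrier := {v : Trinion | Trinion.conj v = v}
  mul_mem' := by
    intro x y hx hy
    have hx2 := congrArg Trinion.c hx
    have hy2 := congrArg Trinion.c hy
    simp only [conj] at hx2 hy2
    show conj _ = _
    ext <;> simp [conj, ← hx2, ← hy2] <;> ring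
  add_mem' := by
    intro x y hx hy
    have hx2 := congrArg Trinion.c hx
    have hy2 := congrArg Trinion.c hy
    simp only [conj] at hx2 hy2
    show conj _ = _
    ext <;> simp [conj, ← hx2, ← hy2] <;> ring
  algebraMap_mem' := by
    intro r
    simp [conj, Trinion.ext_iff]

lemma mem_fixedSub {v : Trinion} : v ∈ fixedSub ↔ v.c = -v.b := by
  constructor
  · intro h
    have := congrArg Trinion.c h
    simpa [conj] using this.symm
  · intro h
    show conj v = v
    simp [conj, Trinion.ext_iff, h]

noncomputable def fixedEquiv : fixedSub ≃ₐ[ℝ] (ℝ × ℝ) where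
  toFun v := (v.1.a + v.1.b, v.1.a - 2 * v.1.b)
  invFun p := ⟨⟨(2 * p.1 + p.2) / 3, (p.1 - p.2) / 3, -((p.1 - p.2) / 3)⟩,
    mem_fixedSub.mpr rfl⟩
  left_inv v := by
    have h := mem_fixedSub.mp v.2
    ext <;> simp [h] <;> ring
  right_inv p := by ext <;> simp <;> ring
  map_mul' v w := by
    have hv := mem_fixedSub.mp v.2
    have hw := mem_fixedSub.mp w.2
    have : ((v * w : fixedSub) : Trinion) = (v : Trinion) * (w : Trinion) := rfl
    ext <;> simp [this, Prod.ext_iff, hv, hw] <;> ring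
  map_add' v w := by
    have : ((v + w : fixedSub) : Trinion) = (v : Trinion) + (w : Trinion) := rfl
    ext <;> simp [this] <;> ring
  commutes' r := by
    have : ((algebraMap ℝ fixedSub r : fixedSub) : Trinion) = algebraMap ℝ Trinion r := rfl
    ext <;> simp [this, Algebra.algebraMap_eq_smul_one] <;> ring

end Trinion

/-- The fixed set of conjugation, `{v : v* = v} = {a + i b - j b}`, is a
2-dimensional subalgebra of the trinions, isomorphic as an ℝ-algebra to `ℝ × ℝ`. -/
theorem trinion_conj_fixed_subalgebra :
    ({v : Trinion | Trinion.conj v = v} = {v : Trinion | ∃ a b : ℝ, v = ⟨a, b, -b⟩}) ∧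
    ∃ S : Subalgebra ℝ Trinion,
      (S : Set Trinion) = {v : Trinion | Trinion.conj v = v} ∧
      Module.finrank ℝ S = 2 ∧
      Nonempty (S ≃ₐ[ℝ] (ℝ × ℝ)) := by
  constructor
  · ext v
    constructor
    · intro h
      refine ⟨v.a, v.b, ?_⟩
      have h2 := congrArg Trinion.c h
      simp [Trinion.conj] at h2
      ext <;> simp <;> linarith
    · rintro ⟨a, b, rfl⟩
      simp [Set.mem_setOf_eq, Trinion.conj]
  · refine ⟨Trinion.fixedSub, rfl, ?_, ⟨Trinion.fixedEquiv⟩⟩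
    rw [Trinion.fixedEquiv.toLinearEquiv.finrank_eq]
    simp [Module.finrank_prod]
end

section
/- For the scalar trinion cost J(w) = |d - w x|^2 viewed as a real function of the three real components (w_a, w_b, w_c) of w (with fixed trinions d and x), the conjugate trinion gradient satisfies ∇_{w*} J = (1/3)(∂J/∂w_a + i ∂J/∂w_b + j ∂J/∂w_c) = -(2/3) e x*, where e = d - w x. -/
/-! Along the line `t ↦ w + (t - s) e` the error `d - u x` moves affinely with velocity
`-e x`, so the derivative of `J` there is `-2 ⟪d - w x, e x⟫`. For `e = 1, i, j` these three
inner products are exactly the components of `(d - w x) x*`, whence the gradient formula. -/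

namespace Trinion

def normSq (v : Trinion) : ℝ := v.a ^ 2 + v.b ^ 2 + v.c ^ 2

def dot (v w : Trinion) : ℝ := v.a * w.a + v.b * w.b + v.c * w.c

lemma mul_conj_a (v x : Trinion) : (v * conj x).a = dot v x := by
  simp only [mul_a, conj, dot]; ring

lemma mul_conj_b (v x : Trinion) : (v * conj x).b = dot v (I * x) := by
  simp only [mul_a, mul_b, mul_c, conj, dot, I]; ring

lemma mul_conj_c (v x : Trinion) : (v * conj x).c = dot v (J * x) := by
  simp only [mul_a, mul_b, mul_c, conj, dot, J]; ring

lemma normSq_sub_smul (c k : Trinion) (r : ℝ) :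
    normSq (c - r • k) = normSq c - 2 * dot c k * r + r ^ 2 * normSq k := by
  simp only [normSq, dot, sub_eq_add_neg, add_a, add_b, add_c, neg_a, neg_b, neg_c,
    smul_a, smul_b, smul_c]
  ring

lemma hasDerivAt_normSq_sub_smul_sub (c k : Trinion) (s : ℝ) :
    HasDerivAt (fun t : ℝ => normSq (c - (t - s) • k)) (-2 * dot c k) s := by
  simp only [normSq_sub_smul]
  have hlin := ((hasDerivAt_id s).sub_const s).const_mul (2 * dot c k)
  have hquad := (((hasDerivAt_id s).sub_const s).fun_pow 2).mul_const (normSq k)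
  simpa using (hlin.const_sub (normSq c)).fun_add hquad

lemma hasDerivAt_normSq_sub_mul_line (d x w e : Trinion) (s : ℝ) :
    HasDerivAt (fun t : ℝ => normSq (d - (w + (t - s) • e) * x))
      (-2 * dot (d - w * x) (e * x)) s := by
  have hline : ∀ t : ℝ, d - (w + (t - s) • e) * x = (d - w * x) - (t - s) • (e * x) := by
    intro t; rw [add_mul, smul_mul_assoc]; ring
  simp only [hline]
  exact hasDerivAt_normSq_sub_smul_sub _ _ s

lemma mk_eq_add_smul_one (w : Trinion) (t : ℝ) :
    (⟨t, w.b, w.c⟩ : Trinion) = w + (t - w.a) • 1 := by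
  ext <;> simp

lemma mk_eq_add_smul_I (w : Trinion) (t : ℝ) :
    (⟨w.a, t, w.c⟩ : Trinion) = w + (t - w.b) • I := by
  ext <;> simp [I]

lemma mk_eq_add_smul_J (w : Trinion) (t : ℝ) :
    (⟨w.a, w.b, t⟩ : Trinion) = w + (t - w.c) • J := by
  ext <;> simp [J]

end Trinion

open Trinion in
/-- For `J(w) = |d - w x|^2`, the conjugate trinion gradient satisfies
`(1/3)(∂J/∂w_a + i ∂J/∂w_b + j ∂J/∂w_c) = -(2/3) e x*` where `e = d - w x`. -/
theorem trinion_lms_gradient (d x w : Trinion) :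
    let Jf : Trinion → ℝ := fun u =>
      (d - u * x).a ^ 2 + (d - u * x).b ^ 2 + (d - u * x).c ^ 2
    (((1 : ℝ) / 3) •
      (⟨deriv (fun t : ℝ => Jf ⟨t, w.b, w.c⟩) w.a,
        deriv (fun t : ℝ => Jf ⟨w.a, t, w.c⟩) w.b,
        deriv (fun t : ℝ => Jf ⟨w.a, w.b, t⟩) w.c⟩ : Trinion))
      = (-(2 : ℝ) / 3) • ((d - w * x) * Trinion.conj x) := by
  intro Jf
  have hJf : ∀ u, Jf u = normSq (d - u * x) := fun u => rfl
  have hpartial : ∀ e s, deriv (fun t : ℝ => normSq (d - (w + (t - s) • e) * x)) s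
      = -2 * dot (d - w * x) (e * x) :=
    fun e s => (hasDerivAt_normSq_sub_mul_line d x w e s).deriv
  simp only [hJf, mk_eq_add_smul_one, mk_eq_add_smul_I, mk_eq_add_smul_J, hpartial, one_mul]
  ext <;> simp only [smul_a, smul_b, smul_c, mul_conj_a, mul_conj_b, mul_conj_c] <;> ring
end
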